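/- arXiv:1503.05858 — 5 statements merged into one kernel-verified Lean document; each statement's English description precedes it below -/
import Mathlib

section
/- Let q > 2 be a power of two, F_s a subfield of F_q, A = {a ∈ F_q : Tr_{q,s}(a) = 1}, B ⊆ F_s*, and D = {ab : a ∈ A, b ∈ B}. Let χ be a nontrivial multiplicative character of F_q* and χ* its restriction to F_s*. Then χ(D) = (χ*(B)/G(χ*))·G(χ) if χ* is nontrivial, and χ(D) = −(χ*(B)/s)·G(χ) if χ* is trivial. -/
/-!
Since `Tr(a b) = b Tr(a)` for `b ∈ F_s`, the products `a b` are pairwise distinct, so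
`χ(D) = χ(A) χ*(B)`. Let `ψ` be the canonical additive character of `F_s`; then `ψ ∘ Tr_{q,s}` is
that of `F_q`. Detecting `Tr a = 1` through `s·[t = 1] = ∑_{u ∈ F_s} ψ(u (t - 1))` gives
`s χ(A) = G(χ*⁻¹, ψ⁻¹) G(χ)`, and `G(χ*) G(χ*⁻¹, ψ⁻¹) = s` when `χ*` is nontrivial, while
`G(1, ψ⁻¹) = -1`.
-/

open scoped Classical

open Finset AddChar

namespace MulChar

variable {R S R' : Type*} [CommRing R] [CommRing S] [CommRing R']

/-- For `f = algebraMap F_s F_q` this is the restriction `χ*` of the paper. -/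
def comap (χ : MulChar S R') (f : R →+* S) [IsLocalHom f] : MulChar R R' where
  toFun a := χ (f a)
  map_one' := by simp
  map_mul' a b := by simp
  map_nonunit' a ha := χ.map_nonunit fun h ↦ ha (h.of_map f a)

variable (χ : MulChar S R') (f : R →+* S) [IsLocalHom f]

@[simp]
lemma comap_apply (a : R) : χ.comap f a = χ (f a) := rfl

lemma comap_inv : (χ.comap f)⁻¹ = χ⁻¹.comap f := by
  ext a
  simp only [inv_apply_eq_inv, comap_apply]

lemma comap_eq_one_iff {K : Type*} [Field K] (g : K →+* S) [IsLocalHom g] :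
    χ.comap g = 1 ↔ ∀ b : K, b ≠ 0 → χ (g b) = 1 :=
  eq_one_iff.trans ⟨fun h b hb ↦ h (Units.mk0 b hb), fun h a ↦ h a a.ne_zero⟩

end MulChar

section GaussSum

variable {F R' : Type*} [Field F] [Fintype F] [CommRing R']

lemma gaussSum_eq_sum_ne_zero (χ : MulChar F R') (ψ : AddChar F R') :
    gaussSum χ ψ = ∑ y with y ≠ 0, χ y * ψ y := by
  rw [gaussSum, sum_filter_of_ne]
  intro y _ hy h0
  simp [h0, MulChar.map_zero] at hy

variable [IsDomain R']

lemma gaussSum_mulShift_of_ne_one {χ : MulChar F R'} (hχ : χ ≠ 1) (ψ : AddChar F R') (a : F) :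
    gaussSum χ (ψ.mulShift a) = χ⁻¹ a * gaussSum χ ψ := by
  rcases eq_or_ne a 0 with rfl | ha
  · simp [gaussSum_one_right hχ, MulChar.map_zero]
  · exact gaussSum_mulShift_eq χ ψ (Units.mk0 a ha)

end GaussSum

section RelativeTrace

variable {K L : Type*} [Field K] [Field L] [Algebra K L]

lemma trace_mul_algebraMap (a : L) (b : K) :
    Algebra.trace K L (a * algebraMap K L b) = b * Algebra.trace K L a := by
  rw [mul_comm, ← Algebra.smul_def, map_smul, smul_eq_mul]

lemma injOn_mul_algebraMap {A : Finset L} (hA : ∀ a ∈ A, Algebra.trace K L a = 1)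
    {B : Finset K} (hB : (0 : K) ∉ B) :
    Set.InjOn (fun p : L × K ↦ p.1 * algebraMap K L p.2) (A ×ˢ B : Finset (L × K)) := by
  rintro ⟨a₁, b₁⟩ h₁ ⟨a₂, b₂⟩ h₂ h
  simp only [coe_product, Set.mem_prod, mem_coe] at h₁ h₂ h
  have hb : b₁ = b₂ := by
    simpa [trace_mul_algebraMap, hA _ h₁.1, hA _ h₂.1] using congrArg (Algebra.trace K L) h
  subst hb
  have hb₁ : algebraMap K L b₁ ≠ 0 := by
    rw [map_ne_zero]; rintro rfl; exact hB h₁.2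
  rw [mul_right_cancel₀ hb₁ h]

lemma sum_mulChar_mul_algebraMap {R' : Type*} [CommSemiring R'] (χ : MulChar L R')
    {A : Finset L} (hA : ∀ a ∈ A, Algebra.trace K L a = 1) {B : Finset K} (hB : (0 : K) ∉ B)
    {D : Finset L} (hD : ∀ d, d ∈ D ↔ ∃ a ∈ A, ∃ b ∈ B, d = a * algebraMap K L b) :
    ∑ d ∈ D, χ d = (∑ a ∈ A, χ a) * ∑ b ∈ B, χ (algebraMap K L b) := by
  have hD' : D = (A ×ˢ B).image fun p ↦ p.1 * algebraMap K L p.2 := by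
    ext d
    simp [hD, and_assoc, eq_comm]
  rw [hD', sum_image (injOn_mul_algebraMap hA hB), sum_product, sum_mul_sum]
  simp_rw [map_mul]

variable [Fintype K] [Fintype L] {R' : Type*} [CommRing R'] [IsDomain R']

lemma card_mul_sum_trace_eq_one {χ : MulChar L R'} (hχ : χ ≠ 1) {ψ : AddChar K R'} (hψ : ψ ≠ 1) :
    Fintype.card K * ∑ a with Algebra.trace K L a = 1, χ a =
      gaussSum (χ.comap (algebraMap K L))⁻¹ ψ⁻¹ *
        gaussSum χ (ψ.compAddMonoidHom (Algebra.trace K L).toAddMonoidHom) := by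
  set ψL := ψ.compAddMonoidHom (Algebra.trace K L).toAddMonoidHom
  have hsplit (a : L) (u : K) :
      ψ (u * (Algebra.trace K L a - 1)) = ψ⁻¹ u * ψL (algebraMap K L u * a) := by
    rw [mul_sub, mul_one, sub_eq_neg_add, map_add_eq_mul, inv_apply, mul_comm (algebraMap K L u),
      compAddMonoidHom_apply, LinearMap.toAddMonoidHom_coe, trace_mul_algebraMap]
  calc (Fintype.card K : R') * ∑ a with Algebra.trace K L a = 1, χ a
      = ∑ a, χ a * ∑ u, ψ (u * (Algebra.trace K L a - 1)) := by
        simp_rw [sum_mulShift _ (IsPrimitive.of_ne_one hψ), sub_eq_zero, mul_sum, sum_filter]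
        refine sum_congr rfl fun a _ ↦ ?_
        split_ifs <;> simp [mul_comm]
    _ = ∑ u, ψ⁻¹ u * gaussSum χ (ψL.mulShift (algebraMap K L u)) := by
        simp_rw [hsplit, gaussSum, mulShift_apply, mul_sum]
        rw [sum_comm]
        refine sum_congr rfl fun u _ ↦ sum_congr rfl fun a _ ↦ by ring
    _ = _ := by
        simp_rw [gaussSum_mulShift_of_ne_one hχ, MulChar.comap_inv, gaussSum, sum_mul]
        refine sum_congr rfl fun u _ ↦ by simp only [MulChar.comap_apply]; ring

variable {R' : Type*} [Field R'] [CharZero R'] {χ : MulChar L R'} {ψ : AddChar K R'}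

lemma sum_trace_eq_one_of_comap_ne_one (hχ : χ ≠ 1) (hψ : ψ ≠ 1)
    (hχK : χ.comap (algebraMap K L) ≠ 1) :
    ∑ a with Algebra.trace K L a = 1, χ a =
      gaussSum χ (ψ.compAddMonoidHom (Algebra.trace K L).toAddMonoidHom) /
        gaussSum (χ.comap (algebraMap K L)) ψ := by
  have hcard : (Fintype.card K : R') ≠ 0 := Nat.cast_ne_zero.mpr Fintype.card_ne_zero
  have hprod := gaussSum_mul_gaussSum_eq_card hχK (IsPrimitive.of_ne_one hψ)
  have hG : gaussSum (χ.comap (algebraMap K L)) ψ ≠ 0 := by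
    rintro h; rw [h, zero_mul] at hprod; exact hcard hprod.symm
  rw [eq_div_iff hG, ← mul_right_inj' hcard]
  calc _ = gaussSum (χ.comap (algebraMap K L)) ψ *
          (Fintype.card K * ∑ a with Algebra.trace K L a = 1, χ a) := by ring
    _ = _ := by rw [card_mul_sum_trace_eq_one hχ hψ, ← mul_assoc, hprod]

lemma sum_trace_eq_one_of_comap_eq_one (hχ : χ ≠ 1) (hψ : ψ ≠ 1)
    (hχK : χ.comap (algebraMap K L) = 1) :
    ∑ a with Algebra.trace K L a = 1, χ a =
      -(gaussSum χ (ψ.compAddMonoidHom (Algebra.trace K L).toAddMonoidHom) / Fintype.card K) := by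
  have hcard : (Fintype.card K : R') ≠ 0 := Nat.cast_ne_zero.mpr Fintype.card_ne_zero
  rw [eq_neg_iff_add_eq_zero, ← mul_right_inj' hcard, mul_add, card_mul_sum_trace_eq_one hχ hψ,
    hχK, inv_one, gaussSum_one_left (inv_ne_one.mpr hψ), mul_div_cancel₀ _ hcard]
  ring

end RelativeTrace

section TraceCharacter

variable (F : Type*) [Field F] [Algebra (ZMod 2) F]

noncomputable def traceChar : AddChar F ℂ :=
  (zmodChar 2 (neg_one_sq (R := ℂ))).compAddMonoidHom (Algebra.trace (ZMod 2) F).toAddMonoidHom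

lemma traceChar_apply (y : F) : traceChar F y = (-1 : ℂ) ^ (Algebra.trace (ZMod 2) F y).val := rfl

lemma traceChar_ne_one [Finite F] : traceChar F ≠ 1 := by
  obtain ⟨c, hc⟩ := Algebra.trace_surjective (ZMod 2) F 1
  refine DFunLike.ne_iff.mpr ⟨c, ?_⟩
  rw [traceChar_apply, hc, ZMod.val_one]
  norm_num

variable {F} (L : Type*) [Field L] [Finite L] [Algebra (ZMod 2) L] [Algebra F L]

lemma traceChar_comp_trace [Finite F] :
    (traceChar F).compAddMonoidHom (Algebra.trace F L).toAddMonoidHom = traceChar L := by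
  ext y
  rw [compAddMonoidHom_apply, LinearMap.toAddMonoidHom_coe, traceChar_apply, traceChar_apply,
    Algebra.trace_trace]

end TraceCharacter

theorem gmw_char_values_general (Fs Fq : Type*) [Field Fs] [Field Fq] [Fintype Fs] [Fintype Fq]
    [Algebra Fs Fq] [Algebra (ZMod 2) Fs] [Algebra (ZMod 2) Fq]
    (B : Finset Fs) (hB : (0 : Fs) ∉ B)
    (A : Finset Fq) (hA : ∀ a : Fq, a ∈ A ↔ Algebra.trace Fs Fq a = 1)
    (D : Finset Fq) (hD : ∀ d : Fq, d ∈ D ↔ ∃ a ∈ A, ∃ b ∈ B, d = a * algebraMap Fs Fq b)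
    (χ : MulChar Fq ℂ) (hχ : χ ≠ 1) :
    ((∃ b : Fs, b ≠ 0 ∧ χ (algebraMap Fs Fq b) ≠ 1) →
      ∑ d ∈ D, χ d =
        (∑ b ∈ B, χ (algebraMap Fs Fq b)) /
          (∑ y ∈ Finset.univ.filter (fun y : Fs => y ≠ 0),
            χ (algebraMap Fs Fq y) * (-1 : ℂ) ^ (Algebra.trace (ZMod 2) Fs y).val) *
          (∑ y ∈ Finset.univ.filter (fun y : Fq => y ≠ 0),
            χ y * (-1 : ℂ) ^ (Algebra.trace (ZMod 2) Fq y).val)) ∧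
    ((∀ b : Fs, b ≠ 0 → χ (algebraMap Fs Fq b) = 1) →
      ∑ d ∈ D, χ d =
        -((∑ b ∈ B, χ (algebraMap Fs Fq b)) / (Fintype.card Fs : ℂ)) *
          (∑ y ∈ Finset.univ.filter (fun y : Fq => y ≠ 0),
            χ y * (-1 : ℂ) ^ (Algebra.trace (ZMod 2) Fq y).val)) := by
  have hA' : A = univ.filter fun a ↦ Algebra.trace Fs Fq a = 1 := by
    ext a
    simp [hA]
  rw [sum_mulChar_mul_algebraMap χ (fun a ha ↦ (hA a).1 ha) hB hD, hA']
  simp only [← traceChar_apply, ← MulChar.comap_apply χ (algebraMap Fs Fq),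
    ← gaussSum_eq_sum_ne_zero]
  rw [← traceChar_comp_trace (F := Fs) Fq]
  have hψ := traceChar_ne_one Fs
  constructor
  · intro h
    rw [sum_trace_eq_one_of_comap_ne_one hχ hψ (by simpa [MulChar.comap_eq_one_iff] using h)]
    ring
  · intro h
    rw [sum_trace_eq_one_of_comap_eq_one hχ hψ ((MulChar.comap_eq_one_iff _ _).mpr h)]
    ring

/-- Character values of the Gordon-Mills-Welch construction: with `q > 2` a power of two,
`A = {a ∈ F_q : Tr_{q,s}(a) = 1}`, `B ⊆ F_s*`, `D = {ab : a ∈ A, b ∈ B}` and `χ` a nontrivial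
multiplicative character of `F_q*` with restriction `χ*` to `F_s*`, we have
`χ(D) = χ*(B)/G(χ*) · G(χ)` if `χ*` is nontrivial and `χ(D) = -(χ*(B)/s) · G(χ)` otherwise,
where `G` denotes the canonical Gauss sum (with the additive character `y ↦ (-1)^{Tr(y)}`
since the characteristic is `2`). -/
theorem gmw_char_values (Fs Fq : Type*) [Field Fs] [Field Fq] [Fintype Fs] [Fintype Fq]
    [Algebra Fs Fq] [CharP Fs 2] [CharP Fq 2] [Algebra (ZMod 2) Fs] [Algebra (ZMod 2) Fq]
    (hq : 2 < Fintype.card Fq)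
    (B : Finset Fs) (hB : (0 : Fs) ∉ B)
    (A : Finset Fq) (hA : ∀ a : Fq, a ∈ A ↔ Algebra.trace Fs Fq a = 1)
    (D : Finset Fq) (hD : ∀ d : Fq, d ∈ D ↔ ∃ a ∈ A, ∃ b ∈ B, d = a * algebraMap Fs Fq b)
    (χ : MulChar Fq ℂ) (hχ : χ ≠ 1) :
    ((∃ b : Fs, b ≠ 0 ∧ χ (algebraMap Fs Fq b) ≠ 1) →
      ∑ d ∈ D, χ d =
        (∑ b ∈ B, χ (algebraMap Fs Fq b)) /
          (∑ y ∈ Finset.univ.filter (fun y : Fs => y ≠ 0),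
            χ (algebraMap Fs Fq y) * (-1 : ℂ) ^ (Algebra.trace (ZMod 2) Fs y).val) *
          (∑ y ∈ Finset.univ.filter (fun y : Fq => y ≠ 0),
            χ y * (-1 : ℂ) ^ (Algebra.trace (ZMod 2) Fq y).val)) ∧
    ((∀ b : Fs, b ≠ 0 → χ (algebraMap Fs Fq b) = 1) →
      ∑ d ∈ D, χ d =
        -((∑ b ∈ B, χ (algebraMap Fs Fq b)) / (Fintype.card Fs : ℂ)) *
          (∑ y ∈ Finset.univ.filter (fun y : Fq => y ≠ 0),
            χ y * (-1 : ℂ) ^ (Algebra.trace (ZMod 2) Fq y).val)) :=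
  gmw_char_values_general Fs Fq B hB A hA D hD χ hχ
end

section
/- Let q > 2 be a power of two, F_s a subfield, A = {a ∈ F_q : Tr_{q,s}(a) = 1}, and B a difference set in F_s* with |B| = s/2. Then D = {ab : a ∈ A, b ∈ B} is a difference set in the cyclic group F_q* with parameters (q−1, q/2, q/4). -/
/-!
Because `Tr(a b) = b Tr(a)` for `b ∈ F_s` and `0 ∉ B`, the set `D` is exactly the preimage
`Tr⁻¹(B)`, so `|D| = |B| q / s`, and the pairs `(g d, d)` in `D × D` are counted by the `x` with
`Tr x ∈ B` and `Tr (g x) ∈ B`. If `g ∈ F_s`, then `Tr (g x) = g Tr x` and the count reduces to the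
difference property of `B`. Otherwise, nondegeneracy of the trace form makes
`x ↦ (Tr x, Tr (g x))` a surjection `F_q → F_s²`, so each of the `|B|² = s²/4` target pairs has
`q / s²` preimages.
-/

open scoped Classical
open Finset

theorem Finset.card_filter_fst_eq_apply_snd {α : Type*} (s : Finset α) (f : α → α) :
    #{p ∈ s ×ˢ s | p.1 = f p.2} = #{x ∈ s | f x ∈ s} :=
  card_nbij' Prod.snd (fun x => (f x, x))
    (fun p hp => by
      simp only [mem_coe, mem_filter, mem_product] at hp ⊢
      exact ⟨hp.1.2, hp.2 ▸ hp.1.1⟩)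
    (fun x hx => by simp_all)
    (fun p hp => by simp_all [Prod.ext_iff])
    (fun x _ => rfl)

theorem AddMonoidHom.card_filter_mem_mul_card {G H F : Type*} [AddGroup G] [AddGroup H]
    [Fintype G] [Fintype H] [FunLike F G H] [AddMonoidHomClass F G H]
    (f : F) (hf : Function.Surjective f) (S : Finset H) :
    #{x | f x ∈ S} * Fintype.card H = #S * Fintype.card G := by
  have hfiber : ∀ y, #{x | f x = y} = #{x | f x = 0} := fun y =>
    AddMonoidHom.card_fiber_eq_of_mem_range f (hf y) (hf 0)
  have hG : Fintype.card G = Fintype.card H * #{x | f x = 0} := by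
    rw [← card_univ, card_eq_sum_card_fiberwise (fun x _ => mem_univ (f x)),
      sum_congr rfl fun y _ => hfiber y, sum_const, card_univ, smul_eq_mul]
  rw [← sum_card_fiberwise_eq_card_filter, sum_congr rfl fun y _ => hfiber y, sum_const,
    smul_eq_mul, hG]
  ring

namespace Algebra

variable {K L : Type*} [Field K] [Field L] [Algebra K L]

theorem trace_mul_algebraMap (a : L) (b : K) :
    trace K L (a * algebraMap K L b) = b * trace K L a := by
  rw [mul_comm, ← smul_def, map_smul, smul_eq_mul]

theorem exists_trace_eq_one_mul_algebraMap_iff {B : Finset K} (hB : (0 : K) ∉ B) (d : L) :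
    (∃ a, trace K L a = 1 ∧ ∃ b ∈ B, d = a * algebraMap K L b) ↔ trace K L d ∈ B := by
  constructor
  · rintro ⟨a, ha, b, hb, rfl⟩
    rwa [trace_mul_algebraMap, ha, mul_one]
  · intro hd
    have ht : trace K L d ≠ 0 := fun h => hB (h ▸ hd)
    refine ⟨d * algebraMap K L (trace K L d)⁻¹, ?_, trace K L d, hd, ?_⟩
    · rw [trace_mul_algebraMap, inv_mul_cancel₀ ht]
    · rw [mul_assoc, ← map_mul, inv_mul_cancel₀ ht, map_one, mul_one]

variable (K) in
noncomputable def traceMulPair (g : L) : L →ₗ[K] K × K :=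
  (trace K L).prod ((trace K L).comp (LinearMap.mulLeft K g))

theorem traceMulPair_apply (g x : L) :
    traceMulPair K g x = (trace K L x, trace K L (g * x)) :=
  rfl

theorem traceMulPair_surjective [FiniteDimensional K L] [Algebra.IsSeparable K L] {g : L}
    (hg : g ∉ Set.range (algebraMap K L)) : Function.Surjective (traceMulPair K g) := by
  rw [← LinearMap.range_eq_top]
  -- A nonzero form `(x, y) ↦ c₁ x + c₂ y` killing the range makes `c₁ + c₂ g` trace-orthogonal
  -- to all of `L`, hence zero, which forces `g ∈ K` unless `c₁ = c₂ = 0`.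
  by_contra hne
  obtain ⟨φ, hφ0, hφ⟩ :=
    (LinearMap.range (traceMulPair K g)).exists_le_ker_of_lt_top (lt_top_iff_ne_top.2 hne)
  set c₁ := φ (1, 0)
  set c₂ := φ (0, 1)
  have hφ_apply : ∀ x y, φ (x, y) = x * c₁ + y * c₂ := fun x y => by
    have : ((x, y) : K × K) = x • (1, 0) + y • (0, 1) := by simp
    rw [this, map_add, map_smul, map_smul, smul_eq_mul, smul_eq_mul]
  have hform : ∀ a : L, trace K L ((algebraMap K L c₁ + algebraMap K L c₂ * g) * a) = 0 := by
    intro a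
    have := hφ (LinearMap.mem_range_self (traceMulPair K g) a)
    rw [LinearMap.mem_ker, traceMulPair_apply, hφ_apply] at this
    have hsplit : (algebraMap K L c₁ + algebraMap K L c₂ * g) * a
        = a * algebraMap K L c₁ + (g * a) * algebraMap K L c₂ := by ring
    rw [hsplit, map_add, trace_mul_algebraMap, trace_mul_algebraMap]
    linear_combination this
  have hzero : algebraMap K L c₁ + algebraMap K L c₂ * g = 0 :=
    (traceForm_nondegenerate K L).1 _ hform
  have hc₂ : c₂ = 0 := by
    by_contra hc₂
    refine hg ⟨-c₁ / c₂, ?_⟩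
    rw [map_div₀, map_neg, div_eq_iff ((map_ne_zero (algebraMap K L)).2 hc₂)]
    linear_combination -hzero
  have hc₁ : c₁ = 0 := by
    simpa [hc₂] using hzero
  exact hφ0 (LinearMap.ext fun ⟨x, y⟩ => by simp [hφ_apply, hc₁, hc₂])

end Algebra

section FiniteField

variable {K L : Type*} [Field K] [Field L] [Algebra K L] [Fintype K] [Fintype L]

theorem Algebra.card_trace_mem_mul_card (S : Finset K) :
    #{x : L | trace K L x ∈ S} * Fintype.card K = #S * Fintype.card L :=
  AddMonoidHom.card_filter_mem_mul_card (trace K L) (trace_surjective K L) S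

theorem Algebra.card_trace_mem_and_trace_algebraMap_mul_mem (c : K) (S T : Finset K) :
    #{x : L | trace K L x ∈ S ∧ trace K L (algebraMap K L c * x) ∈ T} * Fintype.card K
      = #{b ∈ S | c * b ∈ T} * Fintype.card L := by
  simpa [mul_comm (algebraMap K L c), trace_mul_algebraMap] using
    card_trace_mem_mul_card (L := L) {b ∈ S | c * b ∈ T}

theorem Algebra.card_trace_mem_and_trace_mul_mem {g : L}
    (hg : g ∉ Set.range (algebraMap K L)) (S T : Finset K) :
    #{x : L | trace K L x ∈ S ∧ trace K L (g * x) ∈ T} * Fintype.card K ^ 2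
      = #S * #T * Fintype.card L := by
  simpa [traceMulPair_apply, Fintype.card_prod, sq, card_product] using
    AddMonoidHom.card_filter_mem_mul_card _ (traceMulPair_surjective hg) (S ×ˢ T)

theorem Algebra.four_mul_card_trace_mem_and_trace_mul_mem {B : Finset K}
    (hBcard : 2 * #B = Fintype.card K)
    (hBdiff : ∀ c : K, c ≠ 0 → c ≠ 1 → 4 * #{p ∈ B ×ˢ B | p.1 = c * p.2} = Fintype.card K)
    {g : L} (hg0 : g ≠ 0) (hg1 : g ≠ 1) :
    4 * #{x : L | trace K L x ∈ B ∧ trace K L (g * x) ∈ B} = Fintype.card L := by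
  have hK : 0 < Fintype.card K := Fintype.card_pos
  by_cases hg : g ∈ Set.range (algebraMap K L)
  · obtain ⟨c, rfl⟩ := hg
    have hc := hBdiff c (by rintro rfl; simp at hg0) (by rintro rfl; simp at hg1)
    rw [card_filter_fst_eq_apply_snd] at hc
    apply Nat.eq_of_mul_eq_mul_right hK
    rw [mul_assoc, card_trace_mem_and_trace_algebraMap_mul_mem, ← mul_assoc, hc, mul_comm]
  · apply Nat.eq_of_mul_eq_mul_right (pow_pos hK 2)
    rw [mul_assoc, card_trace_mem_and_trace_mul_mem hg, ← hBcard]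
    ring

end FiniteField

theorem gmw_is_difference_set_general (Fs Fq : Type*) [Field Fs] [Field Fq] [Fintype Fs] [Fintype Fq]
    [Algebra Fs Fq]
    (B : Finset Fs) (hB0 : (0 : Fs) ∉ B) (hBcard : 2 * B.card = Fintype.card Fs)
    (hBdiff : ∀ g : Fs, g ≠ 0 → g ≠ 1 →
      4 * ((B ×ˢ B).filter (fun q => q.1 = g * q.2)).card = Fintype.card Fs)
    (A : Finset Fq) (hA : ∀ a : Fq, a ∈ A ↔ Algebra.trace Fs Fq a = 1)
    (D : Finset Fq) (hD : ∀ d : Fq, d ∈ D ↔ ∃ a ∈ A, ∃ b ∈ B, d = a * algebraMap Fs Fq b) :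
    (0 : Fq) ∉ D ∧ 2 * D.card = Fintype.card Fq ∧
    ∀ g : Fq, g ≠ 0 → g ≠ 1 →
      4 * ((D ×ˢ D).filter (fun q => q.1 = g * q.2)).card = Fintype.card Fq := by
  have hD_eq : D = ({d | Algebra.trace Fs Fq d ∈ B} : Finset Fq) := by
    ext d
    simpa only [hD, hA, mem_filter, mem_univ, true_and] using
      Algebra.exists_trace_eq_one_mul_algebraMap_iff hB0 d
  refine ⟨by simpa [hD_eq] using hB0, ?_, fun g hg0 hg1 => ?_⟩
  · apply Nat.eq_of_mul_eq_mul_right (Fintype.card_pos (α := Fs))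
    rw [mul_assoc, hD_eq, Algebra.card_trace_mem_mul_card, ← mul_assoc, hBcard, mul_comm]
  · rw [card_filter_fst_eq_apply_snd, hD_eq, filter_filter]
    simpa only [mem_filter, mem_univ, true_and] using
      Algebra.four_mul_card_trace_mem_and_trace_mul_mem hBcard hBdiff hg0 hg1

/-- If `q > 2` is a power of two, `A = {a ∈ F_q : Tr_{q,s}(a) = 1}` and `B` is a difference set
in `F_s*` with `|B| = s/2`, then `D = {ab : a ∈ A, b ∈ B}` is a difference set in the cyclic
group `F_q*` with parameters `(q-1, q/2, q/4)`. -/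
theorem gmw_is_difference_set (Fs Fq : Type*) [Field Fs] [Field Fq] [Fintype Fs] [Fintype Fq]
    [Algebra Fs Fq] [CharP Fq 2]
    (hq : 2 < Fintype.card Fq)
    (B : Finset Fs) (hB0 : (0 : Fs) ∉ B) (hBcard : 2 * B.card = Fintype.card Fs)
    (hBdiff : ∀ g : Fs, g ≠ 0 → g ≠ 1 →
      4 * ((B ×ˢ B).filter (fun q => q.1 = g * q.2)).card = Fintype.card Fs)
    (A : Finset Fq) (hA : ∀ a : Fq, a ∈ A ↔ Algebra.trace Fs Fq a = 1)
    (D : Finset Fq) (hD : ∀ d : Fq, d ∈ D ↔ ∃ a ∈ A, ∃ b ∈ B, d = a * algebraMap Fs Fq b) :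
    (0 : Fq) ∉ D ∧ 2 * D.card = Fintype.card Fq ∧
    ∀ g : Fq, g ≠ 0 → g ≠ 1 →
      4 * ((D ×ˢ D).filter (fun q => q.1 = g * q.2)).card = Fintype.card Fq :=
  gmw_is_difference_set_general Fs Fq B hB0 hBcard hBdiff A hA D hD
end

section
/- Let q be an odd prime power, η the quadratic character of F_q, θ a generator of F_q*, ξ the multiplicative character with ξ(θ) = e^{2πi/(q−1)}, and f(z) = z^{(q−1)/2} + ∑_{j=0}^{q−2} η(θ^j + 1) z^j. Then f(1) = 0, and for every integer k not divisible by q−1, f(e^{2πik/(q−1)}) = (−1)^k (1 + J(η, ξ^k)), where J denotes the Jacobi sum. -/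
/-!
With `χ = ξ ^ k` we have `e^{2πik/(q-1)} = χ(θ)`, so the substitution `x = θ ^ j` turns
`∑_j η(θ^j + 1) χ(θ)^j` into `∑_{x ≠ 0} η(x + 1) χ(x)`, and the shift `y = x + 1` makes this
`χ(-1) J(η, χ)`. As `θ ^ ((q-1)/2) = -1`, the leading term `χ(θ)^((q-1)/2)` is also `χ(-1)`, which
equals `(-1)^k` because `ξ(θ)` is a primitive `(q-1)`-th root of unity. For `f(1)` the same
computation with the trivial character gives `J(η, 1) = -1`, cancelling the leading `1`.
-/

open scoped Classical

/-- The extension of a multiplicative character to `0`, with the convention `χ(0) = 1` for the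
trivial character and `χ(0) = 0` otherwise. -/
noncomputable def mext {F : Type*} [Field F] (χ : MulChar F ℂ) : F → ℂ :=
  fun x => if x = 0 then (if χ = 1 then 1 else 0) else χ x

/-- The Jacobi sum `J(ψ, χ) = ∑_{y ∈ F_q} ψ(y) χ(1-y)`. -/
noncomputable def jacSum {F : Type*} [Field F] [Fintype F] (ψ χ : MulChar F ℂ) : ℂ :=
  ∑ y : F, mext ψ y * mext χ (1 - y)

theorem IsPrimitiveRoot.pow_div_two_eq_neg_one {R : Type*} [CommRing R] [NoZeroDivisors R]
    {ζ : R} {k : ℕ} (h : IsPrimitiveRoot ζ k) (hk : Even k) (hk0 : k ≠ 0) :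
    ζ ^ (k / 2) = -1 := by
  obtain ⟨r, rfl⟩ := hk
  have hsq : ζ ^ ((r + r) / 2) * ζ ^ ((r + r) / 2) = 1 := by
    rw [← pow_add, show (r + r) / 2 + (r + r) / 2 = r + r by omega, h.pow_eq_one]
  have hne : ζ ^ ((r + r) / 2) ≠ 1 := h.pow_ne_one_of_pos_of_lt (by omega) (by omega)
  exact (mul_self_eq_one_iff.mp hsq).resolve_left hne

theorem MulChar.zpow_apply_of_ne_zero {F R : Type*} [Field F] [Field R] (χ : MulChar F R) (k : ℤ)
    {x : F} (hx : x ≠ 0) : (χ ^ k) x = χ x ^ k := by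
  obtain ⟨n, rfl | rfl⟩ := Int.eq_nat_or_neg k
  · rcases eq_or_ne n 0 with rfl | hn
    · simp [MulChar.one_apply (isUnit_iff_ne_zero.mpr hx)]
    · simp [MulChar.pow_apply' _ hn]
  · rcases eq_or_ne n 0 with rfl | hn
    · simp [MulChar.one_apply (isUnit_iff_ne_zero.mpr hx)]
    · have hinv : χ x⁻¹ = (χ x)⁻¹ :=
        eq_inv_of_mul_eq_one_right (by rw [← map_mul, mul_inv_cancel₀ hx, map_one])
      simp [MulChar.inv_apply', MulChar.pow_apply' _ hn, hinv]

theorem Complex.isPrimitiveRoot_exp_div_sub_one {n : ℕ} (hn : 1 < n) :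
    IsPrimitiveRoot (exp (2 * Real.pi * I / ((n : ℂ) - 1))) (n - 1) := by
  simpa [Nat.cast_sub hn.le] using isPrimitiveRoot_exp (n - 1) (by omega)

theorem MulChar.zpow_ne_one_of_isPrimitiveRoot {F R : Type*} [Field F] [Field R]
    {χ : MulChar F R} {θ : F} {n : ℕ} (hθ : θ ≠ 0) (h : IsPrimitiveRoot (χ θ) n) {k : ℤ}
    (hk : ¬ (n : ℤ) ∣ k) : χ ^ k ≠ 1 := by
  intro hχ
  have hχθ := congrArg (· θ) hχ
  simp only [χ.zpow_apply_of_ne_zero k hθ, MulChar.one_apply (isUnit_iff_ne_zero.mpr hθ)] at hχθ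
  exact hk ((h.zpow_eq_one_iff_dvd k).mp hχθ)

theorem mext_eq_of_ne_one {F : Type*} [Field F] {χ : MulChar F ℂ} (hχ : χ ≠ 1) : mext χ = χ := by
  ext x
  by_cases hx : x = 0 <;> simp [mext, hx, hχ, χ.map_zero]

theorem jacSum_eq_jacobiSum {F : Type*} [Field F] [Fintype F] {ψ χ : MulChar F ℂ} (hψ : ψ ≠ 1)
    (hχ : χ ≠ 1) : jacSum ψ χ = jacobiSum ψ χ := by
  simp only [jacSum, jacobiSum, mext_eq_of_ne_one hψ, mext_eq_of_ne_one hχ]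

theorem ne_zero_of_forall_exists_pow_eq {F : Type*} [Field F] {θ : F} (hF : (-1 : F) ≠ 1)
    (hθ : ∀ x : F, x ≠ 0 → ∃ j : ℕ, θ ^ j = x) : θ ≠ 0 := by
  rintro rfl
  obtain ⟨j, hj⟩ := hθ (-1) (neg_ne_zero.mpr one_ne_zero)
  rcases j with _ | j
  · exact hF (by simpa using hj.symm)
  · simp at hj

section FiniteField

variable {F : Type*} [Field F] [Fintype F] {θ : F}

theorem isPrimitiveRoot_card_sub_one_of_forall_exists_pow_eq (hθ0 : θ ≠ 0)
    (hθ : ∀ x : F, x ≠ 0 → ∃ j : ℕ, θ ^ j = x) : IsPrimitiveRoot θ (Fintype.card F - 1) := by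
  have hgen : ∀ v : Fˣ, v ∈ Subgroup.zpowers (Units.mk0 θ hθ0) := fun v ↦ by
    obtain ⟨j, hj⟩ := hθ v v.ne_zero
    exact ⟨j, Units.ext (by simp [hj])⟩
  have hord := orderOf_eq_card_of_forall_mem_zpowers hgen
  rw [← orderOf_units, Units.val_mk0, Nat.card_units, Nat.card_eq_fintype_card] at hord
  exact hord ▸ IsPrimitiveRoot.orderOf θ

theorem IsPrimitiveRoot.sum_range_card_sub_one_pow {M : Type*} [AddCommMonoid M]
    (hθ : IsPrimitiveRoot θ (Fintype.card F - 1)) (g : F → M) :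
    ∑ j ∈ Finset.range (Fintype.card F - 1), g (θ ^ j) = ∑ x ∈ Finset.univ.erase 0, g x := by
  have : NeZero (Fintype.card F - 1) := ⟨by have := Fintype.one_lt_card (α := F); omega⟩
  refine Finset.sum_nbij (θ ^ ·) ?_ ?_ ?_ (fun _ _ ↦ rfl)
  · intro j _
    simpa using pow_ne_zero j (hθ.ne_zero NeZero.out)
  · intro i hi j hj hij
    exact hθ.pow_inj (Finset.mem_range.mp hi) (Finset.mem_range.mp hj) hij
  · intro x hx
    obtain ⟨j, hj, rfl⟩ :=
      hθ.eq_pow_of_pow_eq_one (FiniteField.pow_card_sub_one_eq_one x (Finset.ne_of_mem_erase hx))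
    exact ⟨j, Finset.mem_range.mpr hj, rfl⟩

theorem IsPrimitiveRoot.sum_range_apply_pow_add_one_mul_pow_eq_jacobiSum {R : Type*} [CommRing R]
    (hθ : IsPrimitiveRoot θ (Fintype.card F - 1)) (ψ χ : MulChar F R) :
    ∑ j ∈ Finset.range (Fintype.card F - 1), ψ (θ ^ j + 1) * χ θ ^ j
      = χ (-1) * jacobiSum ψ χ := by
  calc ∑ j ∈ Finset.range (Fintype.card F - 1), ψ (θ ^ j + 1) * χ θ ^ j
      = ∑ x ∈ Finset.univ.erase 0, ψ (x + 1) * χ x := by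
        simp only [← map_pow, hθ.sum_range_card_sub_one_pow fun x ↦ ψ (x + 1) * χ x]
    _ = ∑ x, ψ (x + 1) * χ x := Finset.sum_erase _ (by simp [χ.map_zero])
    _ = ∑ y, ψ y * χ (y - 1) :=
        Fintype.sum_equiv (Equiv.addRight 1) _ _ (fun x ↦ by simp)
    _ = χ (-1) * jacobiSum ψ χ := by
        rw [jacobiSum, Finset.mul_sum]
        refine Fintype.sum_congr _ _ fun y ↦ ?_
        rw [mul_left_comm, ← map_mul, neg_one_mul, neg_sub]

theorem IsPrimitiveRoot.sum_range_apply_pow_add_one_eq_neg_one {R : Type*} [CommRing R]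
    [IsDomain R] (hθ : IsPrimitiveRoot θ (Fintype.card F - 1)) {ψ : MulChar F R} (hψ : ψ ≠ 1) :
    ∑ j ∈ Finset.range (Fintype.card F - 1), ψ (θ ^ j + 1) = -1 := by
  have hθ0 : θ ≠ 0 := hθ.ne_zero (by have := Fintype.one_lt_card (α := F); omega)
  have h := hθ.sum_range_apply_pow_add_one_mul_pow_eq_jacobiSum ψ 1
  rw [MulChar.one_apply (isUnit_iff_ne_zero.mpr hθ0), MulChar.one_apply isUnit_one.neg, one_mul,
    jacobiSum_comm, jacobiSum_one_nontrivial hψ] at h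
  simpa using h

end FiniteField

theorem sidelnikov_poly_values_general (F : Type*) [Field F] [Fintype F]
    (hodd : Odd (Fintype.card F))
    (θ : F) (hθ : ∀ x : F, x ≠ 0 → ∃ j : ℕ, θ ^ j = x)
    (η : MulChar F ℂ) (hη1 : η ≠ 1)
    (ξ : MulChar F ℂ)
    (hξ : ξ θ = Complex.exp (2 * Real.pi * Complex.I / ((Fintype.card F : ℂ) - 1)))
    (f : ℂ → ℂ)
    (hf : ∀ z : ℂ, f z = z ^ ((Fintype.card F - 1) / 2) +
      ∑ j ∈ Finset.range (Fintype.card F - 1), η (θ ^ j + 1) * z ^ j) :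
    f 1 = 0 ∧
    ∀ k : ℤ, ¬ ((Fintype.card F : ℤ) - 1 ∣ k) →
      f (Complex.exp (2 * Real.pi * Complex.I * (k : ℂ) / ((Fintype.card F : ℂ) - 1)))
        = (-1 : ℂ) ^ k * (1 + jacSum η (ξ ^ k)) := by
  have hq : 1 < Fintype.card F := Fintype.one_lt_card
  have hq_even : Even (Fintype.card F - 1) := Nat.Odd.sub_odd hodd odd_one
  have hchar : ringChar F ≠ 2 := by
    rw [Ne, FiniteField.even_card_iff_char_two]
    exact Nat.odd_iff.mp hodd ▸ one_ne_zero
  have hθ0 : θ ≠ 0 := ne_zero_of_forall_exists_pow_eq (Ring.neg_one_ne_one_of_char_ne_two hchar) hθ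
  have hθprim := isPrimitiveRoot_card_sub_one_of_forall_exists_pow_eq hθ0 hθ
  have hθm := hθprim.pow_div_two_eq_neg_one hq_even (by omega)
  have hξθ : IsPrimitiveRoot (ξ θ) (Fintype.card F - 1) :=
    hξ ▸ Complex.isPrimitiveRoot_exp_div_sub_one hq
  refine ⟨?_, fun k hk ↦ ?_⟩
  · rw [hf]
    simp only [one_pow, mul_one, hθprim.sum_range_apply_pow_add_one_eq_neg_one hη1]
    ring
  have hω : Complex.exp (2 * Real.pi * Complex.I * k / ((Fintype.card F : ℂ) - 1)) = (ξ ^ k) θ := by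
    rw [MulChar.zpow_apply_of_ne_zero _ _ hθ0, hξ, ← Complex.exp_int_mul]
    ring_nf
  have hsign : (ξ ^ k) (-1) = (-1) ^ k := by
    rw [MulChar.zpow_apply_of_ne_zero _ _ (neg_ne_zero.mpr one_ne_zero), ← hθm, map_pow,
      hξθ.pow_div_two_eq_neg_one hq_even (by omega)]
  have hχ : ξ ^ k ≠ 1 :=
    MulChar.zpow_ne_one_of_isPrimitiveRoot hθ0 hξθ (by rwa [Nat.cast_sub hq.le, Nat.cast_one])
  rw [hf, hω, ← map_pow, hθm, hθprim.sum_range_apply_pow_add_one_mul_pow_eq_jacobiSum,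
    jacSum_eq_jacobiSum hη1 hχ, hsign]
  ring

/-- For `q` odd, `η` the quadratic character, `θ` a generator of `F_q*`, `ξ` the character with
`ξ(θ) = e^{2πi/(q-1)}` and `f(z) = z^{(q-1)/2} + ∑_{j=0}^{q-2} η(θ^j+1) z^j`, we have `f(1) = 0`
and `f(e^{2πik/(q-1)}) = (-1)^k (1 + J(η, ξ^k))` for every integer `k` not divisible by `q-1`. -/
theorem sidelnikov_poly_values (F : Type*) [Field F] [Fintype F]
    (hodd : Odd (Fintype.card F))
    (θ : F) (hθ : ∀ x : F, x ≠ 0 → ∃ j : ℕ, θ ^ j = x)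
    (η : MulChar F ℂ) (hη2 : η ^ 2 = 1) (hη1 : η ≠ 1)
    (ξ : MulChar F ℂ)
    (hξ : ξ θ = Complex.exp (2 * Real.pi * Complex.I / ((Fintype.card F : ℂ) - 1)))
    (f : ℂ → ℂ)
    (hf : ∀ z : ℂ, f z = z ^ ((Fintype.card F - 1) / 2) +
      ∑ j ∈ Finset.range (Fintype.card F - 1), η (θ ^ j + 1) * z ^ j) :
    f 1 = 0 ∧
    ∀ k : ℤ, ¬ ((Fintype.card F : ℤ) - 1 ∣ k) →
      f (Complex.exp (2 * Real.pi * Complex.I * (k : ℂ) / ((Fintype.card F : ℂ) - 1)))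
        = (-1 : ℂ) ^ k * (1 + jacSum η (ξ ^ k)) :=
  sidelnikov_poly_values_general F hodd θ hθ η hη1 ξ hξ f hf
end

section
/- Let p be an odd prime and let D be the set of squares in F_p*. Then 4|(D+u)∩D| = p − 4 − (−1)^{(p−1)/2} when u is a square in F_p*, and 4|(D+u)∩D| = p − 2 + (−1)^{(p−1)/2} when u is a nonsquare in F_p*. -/
open scoped Classical

open Finset

private lemma quadChar_shift_sum (p : ℕ) [Fact p.Prime] (hp : Odd p)
    (u : ZMod p) (hu : u ≠ 0) :
    ∑ x : ZMod p, quadraticChar (ZMod p) x * quadraticChar (ZMod p) (x - u) = -1 := by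
  have hF : ringChar (ZMod p) ≠ 2 := by
    rw [ZMod.ringChar_zmod_n]
    rintro rfl
    exact (Nat.not_odd_iff_even.mpr (by norm_num)) hp
  have key : ∀ x : ZMod p, x ≠ 0 →
      quadraticChar (ZMod p) x * quadraticChar (ZMod p) (x - u)
        = quadraticChar (ZMod p) (1 - u * x⁻¹) := by
    intro x hx
    have hxu : x - u = x * (1 - u * x⁻¹) := by field_simp
    rw [hxu, map_mul, ← mul_assoc, ← sq, quadraticChar_sq_one hx, one_mul]
  have hbij : ∑ x ∈ Finset.univ.erase (0 : ZMod p), quadraticChar (ZMod p) (1 - u * x⁻¹)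
      = ∑ t ∈ Finset.univ.erase (1 : ZMod p), quadraticChar (ZMod p) t := by
    apply Finset.sum_nbij' (i := fun x => 1 - u * x⁻¹) (j := fun t => u * (1 - t)⁻¹)
    · intro a ha
      have ha0 : a ≠ 0 := Finset.ne_of_mem_erase ha
      simp only [Finset.mem_erase, Finset.mem_univ, and_true]
      intro h
      have : u * a⁻¹ = 0 := by linear_combination -h
      rcases mul_eq_zero.mp this with h' | h'
      · exact hu h'
      · exact ha0 (inv_eq_zero.mp h')
    · intro b hb
      have hb1 : b ≠ 1 := Finset.ne_of_mem_erase hb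
      simp only [Finset.mem_erase, Finset.mem_univ, and_true]
      have h1b : (1 : ZMod p) - b ≠ 0 := sub_ne_zero.mpr (Ne.symm hb1)
      exact mul_ne_zero hu (inv_ne_zero h1b)
    · intro a ha
      have ha0 : a ≠ 0 := Finset.ne_of_mem_erase ha
      have h1 : (1 : ZMod p) - (1 - u * a⁻¹) = u * a⁻¹ := by ring
      rw [h1, mul_inv_rev, inv_inv]
      field_simp
    · intro b hb
      have hb1 : b ≠ 1 := Finset.ne_of_mem_erase hb
      have h1b : (1 : ZMod p) - b ≠ 0 := sub_ne_zero.mpr (Ne.symm hb1)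
      rw [mul_inv_rev, inv_inv]
      field_simp
      ring
    · intro a _
      rfl
  have e1 : ∑ x ∈ Finset.univ.erase (0 : ZMod p),
        quadraticChar (ZMod p) x * quadraticChar (ZMod p) (x - u)
      = (∑ x : ZMod p, quadraticChar (ZMod p) x * quadraticChar (ZMod p) (x - u))
        - quadraticChar (ZMod p) 0 * quadraticChar (ZMod p) (0 - u) :=
    Finset.sum_erase_eq_sub (Finset.mem_univ _)
  have e2 : ∑ x ∈ Finset.univ.erase (0 : ZMod p),
        quadraticChar (ZMod p) x * quadraticChar (ZMod p) (x - u)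
      = ∑ x ∈ Finset.univ.erase (0 : ZMod p), quadraticChar (ZMod p) (1 - u * x⁻¹) :=
    Finset.sum_congr rfl (fun x hx => key x (Finset.ne_of_mem_erase hx))
  have e3 : ∑ t ∈ Finset.univ.erase (1 : ZMod p), quadraticChar (ZMod p) t
      = (∑ t : ZMod p, quadraticChar (ZMod p) t) - quadraticChar (ZMod p) 1 :=
    Finset.sum_erase_eq_sub (Finset.mem_univ _)
  rw [quadraticChar_sum_zero hF, map_one] at e3
  rw [e2, hbij, e3, quadraticChar_zero, zero_mul, sub_zero] at e1
  linarith [e1]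

/-- For `D` the set of nonzero squares of `F_p*` (`p` an odd prime):
`4|(D+u)∩D| = p - 4 - (-1)^{(p-1)/2}` if `u ∈ F_p*` is a square, and
`4|(D+u)∩D| = p - 2 + (-1)^{(p-1)/2}` if `u` is a nonsquare. -/
theorem squares_shift_intersection (p : ℕ) [Fact p.Prime] (hp : Odd p)
    (D : Finset (ZMod p)) (hD : ∀ x : ZMod p, x ∈ D ↔ x ≠ 0 ∧ IsSquare x)
    (u : ZMod p) (hu : u ≠ 0) :
    (IsSquare u →
      4 * (((D.image (fun d => d + u)) ∩ D).card : ℤ)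
        = (p : ℤ) - 4 - (-1 : ℤ) ^ ((p - 1) / 2)) ∧
    (¬ IsSquare u →
      4 * (((D.image (fun d => d + u)) ∩ D).card : ℤ)
        = (p : ℤ) - 2 + (-1 : ℤ) ^ ((p - 1) / 2)) := by
  have hF : ringChar (ZMod p) ≠ 2 := by
    rw [ZMod.ringChar_zmod_n]
    rintro rfl
    exact (Nat.not_odd_iff_even.mpr (by norm_num)) hp
  have hp2 : 2 ≤ p := (Fact.out : p.Prime).two_le
  set S := (D.image (fun d => d + u)) ∩ D with hS
  have hSmem : ∀ x : ZMod p, x ∈ S ↔ (x ≠ 0 ∧ IsSquare x) ∧ (x - u ≠ 0 ∧ IsSquare (x - u)) := by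
    intro x
    simp only [hS, Finset.mem_inter, Finset.mem_image, hD]
    constructor
    · rintro ⟨⟨d, hd, rfl⟩, hx⟩
      exact ⟨hx, by simpa using hd.1, by simpa using hd.2⟩
    · rintro ⟨hx, h1, h2⟩
      exact ⟨⟨x - u, ⟨h1, h2⟩, by ring⟩, hx⟩
  set T := (Finset.univ.erase (0 : ZMod p)).erase u with hT
  have huT : u ∈ Finset.univ.erase (0 : ZMod p) := Finset.mem_erase.mpr ⟨hu, Finset.mem_univ u⟩
  have hTmem : ∀ x : ZMod p, x ∈ T ↔ x ≠ u ∧ x ≠ 0 := by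
    intro x; simp [hT, Finset.mem_erase]
  -- cardinality of T
  have hTcardN : T.card = p - 2 := by
    rw [hT, Finset.card_erase_of_mem huT, Finset.card_erase_of_mem (Finset.mem_univ 0),
      Finset.card_univ, ZMod.card]
    omega
  have hTcard : (T.card : ℤ) = (p : ℤ) - 2 := by
    rw [hTcardN, Nat.cast_sub hp2]; norm_num
  -- the three character sums over T
  have hsum1 : ∑ x ∈ T, quadraticChar (ZMod p) x = -quadraticChar (ZMod p) u := by
    have e1 : ∑ x ∈ T, quadraticChar (ZMod p) x
        = (∑ x ∈ Finset.univ.erase (0 : ZMod p), quadraticChar (ZMod p) x)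
          - quadraticChar (ZMod p) u := Finset.sum_erase_eq_sub huT
    have e2 : ∑ x ∈ Finset.univ.erase (0 : ZMod p), quadraticChar (ZMod p) x
        = (∑ x : ZMod p, quadraticChar (ZMod p) x) - quadraticChar (ZMod p) 0 :=
      Finset.sum_erase_eq_sub (Finset.mem_univ _)
    rw [e1, e2, quadraticChar_sum_zero hF, quadraticChar_zero]
    ring
  have hshift : ∑ x : ZMod p, quadraticChar (ZMod p) (x - u) = 0 := by
    have h := Fintype.sum_equiv (Equiv.subRight u)
      (fun x => quadraticChar (ZMod p) (x - u)) (fun x => quadraticChar (ZMod p) x)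
      (fun x => by simp [Equiv.subRight])
    rw [h]
    exact quadraticChar_sum_zero hF
  have hsum2 : ∑ x ∈ T, quadraticChar (ZMod p) (x - u) = -quadraticChar (ZMod p) (-u) := by
    have e1 : ∑ x ∈ T, quadraticChar (ZMod p) (x - u)
        = (∑ x ∈ Finset.univ.erase (0 : ZMod p), quadraticChar (ZMod p) (x - u))
          - quadraticChar (ZMod p) (u - u) := Finset.sum_erase_eq_sub huT
    have e2 : ∑ x ∈ Finset.univ.erase (0 : ZMod p), quadraticChar (ZMod p) (x - u)
        = (∑ x : ZMod p, quadraticChar (ZMod p) (x - u))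
          - quadraticChar (ZMod p) (0 - u) := Finset.sum_erase_eq_sub (Finset.mem_univ _)
    rw [e1, e2, hshift, sub_self, quadraticChar_zero, zero_sub]
    ring_nf
  have hsum3 : ∑ x ∈ T, quadraticChar (ZMod p) x * quadraticChar (ZMod p) (x - u) = -1 := by
    have e1 : ∑ x ∈ T, quadraticChar (ZMod p) x * quadraticChar (ZMod p) (x - u)
        = (∑ x ∈ Finset.univ.erase (0 : ZMod p),
            quadraticChar (ZMod p) x * quadraticChar (ZMod p) (x - u))
          - quadraticChar (ZMod p) u * quadraticChar (ZMod p) (u - u) :=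
      Finset.sum_erase_eq_sub huT
    have e2 : ∑ x ∈ Finset.univ.erase (0 : ZMod p),
          quadraticChar (ZMod p) x * quadraticChar (ZMod p) (x - u)
        = (∑ x : ZMod p, quadraticChar (ZMod p) x * quadraticChar (ZMod p) (x - u))
          - quadraticChar (ZMod p) 0 * quadraticChar (ZMod p) (0 - u) :=
      Finset.sum_erase_eq_sub (Finset.mem_univ _)
    rw [e1, e2, quadChar_shift_sum p hp u hu, sub_self, quadraticChar_zero]
    ring
  -- relate S.card to the character sum
  have hfilter : T.filter (fun x => IsSquare x ∧ IsSquare (x - u)) = S := by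
    ext x
    rw [Finset.mem_filter, hTmem, hSmem]
    constructor
    · rintro ⟨⟨hxu, hx0⟩, h1, h2⟩
      exact ⟨⟨hx0, h1⟩, sub_ne_zero.mpr hxu, h2⟩
    · rintro ⟨⟨hx0, h1⟩, h2, h3⟩
      exact ⟨⟨fun h => h2 (by rw [h]; ring), hx0⟩, h1, h3⟩
  have hcount : ∑ x ∈ T, (1 + quadraticChar (ZMod p) x) * (1 + quadraticChar (ZMod p) (x - u))
      = 4 * (S.card : ℤ) := by
    have step : ∀ x ∈ T, (1 + quadraticChar (ZMod p) x) * (1 + quadraticChar (ZMod p) (x - u))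
        = if IsSquare x ∧ IsSquare (x - u) then (4 : ℤ) else 0 := by
      intro x hx
      obtain ⟨hxu, hx0⟩ := (hTmem x).mp hx
      have hxu0 : x - u ≠ 0 := sub_ne_zero.mpr hxu
      by_cases h1 : IsSquare x <;> by_cases h2 : IsSquare (x - u)
      · rw [if_pos ⟨h1, h2⟩, (quadraticChar_one_iff_isSquare hx0).mpr h1,
          (quadraticChar_one_iff_isSquare hxu0).mpr h2]; norm_num
      · rw [if_neg (by tauto), quadraticChar_neg_one_iff_not_isSquare.mpr h2]; ring
      · rw [if_neg (by tauto), quadraticChar_neg_one_iff_not_isSquare.mpr h1]; ring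
      · rw [if_neg (by tauto), quadraticChar_neg_one_iff_not_isSquare.mpr h1]; ring
    rw [Finset.sum_congr rfl step, ← Finset.sum_filter, hfilter, Finset.sum_const]
    push_cast
    ring
  have hexpand : ∑ x ∈ T, (1 + quadraticChar (ZMod p) x) * (1 + quadraticChar (ZMod p) (x - u))
      = (T.card : ℤ) + (∑ x ∈ T, quadraticChar (ZMod p) x)
        + (∑ x ∈ T, quadraticChar (ZMod p) (x - u))
        + ∑ x ∈ T, quadraticChar (ZMod p) x * quadraticChar (ZMod p) (x - u) := by
    simp_rw [show ∀ x : ZMod p,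
        (1 + quadraticChar (ZMod p) x) * (1 + quadraticChar (ZMod p) (x - u))
        = 1 + quadraticChar (ZMod p) x + quadraticChar (ZMod p) (x - u)
          + quadraticChar (ZMod p) x * quadraticChar (ZMod p) (x - u) from fun x => by ring]
    rw [Finset.sum_add_distrib, Finset.sum_add_distrib, Finset.sum_add_distrib,
      Finset.sum_const]
    push_cast
    ring
  have hmain : 4 * (S.card : ℤ)
      = (p : ℤ) - 3 - quadraticChar (ZMod p) u - quadraticChar (ZMod p) (-u) := by
    rw [← hcount, hexpand, hTcard, hsum1, hsum2, hsum3]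
    ring
  -- value of χ at -1
  have hχneg1 : quadraticChar (ZMod p) (-1) = (-1 : ℤ) ^ ((p - 1) / 2) := by
    rw [quadraticChar_neg_one hF, ZMod.card p,
      ZMod.χ₄_eq_neg_one_pow (Nat.odd_iff.mp hp)]
    congr 1
    obtain ⟨k, hk⟩ := hp
    omega
  have hχmul : quadraticChar (ZMod p) (-u)
      = (-1 : ℤ) ^ ((p - 1) / 2) * quadraticChar (ZMod p) u := by
    rw [show (-u : ZMod p) = (-1) * u by ring, map_mul, hχneg1]
  constructor
  · intro husq
    have h1 : quadraticChar (ZMod p) u = 1 := (quadraticChar_one_iff_isSquare hu).mpr husq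
    rw [hmain, hχmul, h1]
    ring
  · intro hunsq
    have h1 : quadraticChar (ZMod p) u = -1 := quadraticChar_neg_one_iff_not_isSquare.mpr hunsq
    rw [hmain, hχmul, h1]
    ring
end

section
/- For ν ∈ [0,1] and T = 1, the reciprocal of φ_ν satisfies 1/φ_ν(R, 1) = (2−ν)/6 + 8ν(R − 1/4)² for all R with 0 ≤ R ≤ 1/2; consequently the maximum over R of φ_ν(R,1) equals 6/(2−ν). -/
/-- The reciprocal `1/φ_ν(R,T)` of the limiting merit factor function:
`1 - 2(1+ν)T/3 + 4 ∑_{m≥1} max(0, 1-m/T)² + ν ∑_{m∈ℤ} max(0, 1-|1+(2R-m)/T|)²`. -/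
noncomputable def phiNuInv (ν R T : ℝ) : ℝ :=
  1 - 2 * (1 + ν) * T / 3
    + 4 * ∑' m : ℕ, (max 0 (1 - ((m : ℝ) + 1) / T)) ^ 2
    + ν * ∑' m : ℤ, (max 0 (1 - |1 + (2 * R - (m : ℝ)) / T|)) ^ 2

/-- The limiting merit factor function `φ_ν`. -/
noncomputable def phiNu (ν R T : ℝ) : ℝ := 1 / phiNuInv ν R T

lemma natsum_zero : ∑' m : ℕ, (max 0 (1 - ((m : ℝ) + 1) / 1)) ^ 2 = 0 := by
  have h : ∀ m : ℕ, (max 0 (1 - ((m : ℝ) + 1) / 1)) ^ 2 = 0 := by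
    intro m
    have hm : (0:ℝ) ≤ m := Nat.cast_nonneg m
    have : (1:ℝ) - ((m : ℝ) + 1) / 1 ≤ 0 := by rw [div_one]; linarith
    rw [max_eq_left this]
    simp
  simp only [h, tsum_zero]

lemma zsum (x : ℝ) :
    ∑' m : ℤ, (max 0 (1 - |x - (m : ℝ)|)) ^ 2
      = (1 - Int.fract x) ^ 2 + (Int.fract x) ^ 2 := by
  set n := ⌊x⌋ with hn
  have hfl : (n : ℝ) ≤ x := Int.floor_le x
  have hfl2 : x < n + 1 := Int.lt_floor_add_one x
  have hfr : Int.fract x = x - n := rfl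
  rw [tsum_eq_sum (s := ({n, n + 1} : Finset ℤ)) ?_]
  · rw [Finset.sum_pair (by omega : n ≠ n + 1)]
    have h1 : |x - (n : ℝ)| = Int.fract x := by
      rw [hfr, abs_of_nonneg (by linarith)]
    have h2 : |x - ((n + 1 : ℤ) : ℝ)| = 1 - Int.fract x := by
      push_cast
      rw [hfr, abs_of_nonpos (by linarith)]; ring
    rw [h1, h2]
    have hfr0 : 0 ≤ Int.fract x := Int.fract_nonneg x
    have hfr1 : Int.fract x < 1 := Int.fract_lt_one x
    rw [max_eq_right (by linarith), max_eq_right (by linarith)]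
    ring
  · intro b hb
    simp only [Finset.mem_insert, Finset.mem_singleton] at hb
    push_neg at hb
    have : (1:ℝ) ≤ |x - (b : ℝ)| := by
      rcases lt_or_ge (b : ℝ) (n : ℝ) with h | h
      · have hbz : b < n := by exact_mod_cast h
        have hb1 : b ≤ n - 1 := by omega
        have hb' : ((b : ℝ)) ≤ (n : ℝ) - 1 := by exact_mod_cast hb1
        rw [abs_of_nonneg (by linarith)]; linarith
      · have hbn : n ≤ b := by exact_mod_cast h
        have hbn2 : n + 2 ≤ b := by
          rcases hb with ⟨hb1, hb2⟩; omega
        have hb' : (n : ℝ) + 2 ≤ (b : ℝ) := by exact_mod_cast hbn2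
        rw [abs_of_nonpos (by linarith)]; linarith
    rw [max_eq_left (by linarith)]
    simp

lemma phiNuInv_one (ν R : ℝ) :
    phiNuInv ν R 1 = 1 / 3 - 2 * ν / 3
      + ν * ((1 - Int.fract (1 + 2 * R)) ^ 2 + (Int.fract (1 + 2 * R)) ^ 2) := by
  have h : (fun m : ℤ => (max 0 (1 - |1 + (2 * R - (m : ℝ)) / 1|)) ^ 2)
      = fun m : ℤ => (max 0 (1 - |(1 + 2 * R) - (m : ℝ)|)) ^ 2 := by
    funext m
    have : 1 + (2 * R - (m : ℝ)) / 1 = (1 + 2 * R) - (m : ℝ) := by ring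
    rw [this]
  unfold phiNuInv
  rw [natsum_zero, h, zsum]
  ring

/-- For `ν ∈ [0,1]`: `1/φ_ν(R,1) = (2-ν)/6 + 8ν(R-1/4)²` for `0 ≤ R ≤ 1/2`, and consequently
the maximum over `R` of `φ_ν(R,1)` equals `6/(2-ν)`. -/
theorem phiNu_at_T_one (ν : ℝ) (hν0 : 0 ≤ ν) (hν1 : ν ≤ 1) :
    (∀ R : ℝ, 0 ≤ R → R ≤ 1 / 2 →
      phiNuInv ν R 1 = (2 - ν) / 6 + 8 * ν * (R - 1 / 4) ^ 2) ∧
    IsGreatest (Set.range fun R : ℝ => phiNu ν R 1) (6 / (2 - ν)) := by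
  have key : ∀ R : ℝ, 0 ≤ R → R ≤ 1 / 2 →
      phiNuInv ν R 1 = (2 - ν) / 6 + 8 * ν * (R - 1 / 4) ^ 2 := by
    intro R hR0 hR1
    rw [phiNuInv_one]
    rcases eq_or_lt_of_le hR1 with h | h
    · subst h
      have h2 : Int.fract (1 + 2 * (1/2 : ℝ)) = 0 := by norm_num [Int.fract]
      rw [h2]; ring_nf
    · have h2 : Int.fract (1 + 2 * R) = 2 * R := by
        have : Int.fract (2 * R + (1 : ℤ)) = Int.fract (2 * R) := Int.fract_add_intCast _ _
        push_cast at this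
        rw [show (1 : ℝ) + 2 * R = 2 * R + 1 by ring, this,
          Int.fract_eq_self.2 ⟨by linarith, by linarith⟩]
      rw [h2]; ring
  refine ⟨key, ?_, ?_⟩
  · refine ⟨1 / 4, ?_⟩
    have := key (1/4) (by norm_num) (by norm_num)
    simp only [phiNu, this]
    norm_num [one_div_div]
  · rintro y ⟨R, rfl⟩
    have hs : 1 / 2 ≤ (1 - Int.fract (1 + 2 * R)) ^ 2 + (Int.fract (1 + 2 * R)) ^ 2 := by
      nlinarith [sq_nonneg (1 - 2 * Int.fract (1 + 2 * R))]
    have hlow : (2 - ν) / 6 ≤ phiNuInv ν R 1 := by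
      rw [phiNuInv_one]; nlinarith
    have hpos : 0 < (2 - ν) / 6 := by linarith
    calc phiNu ν R 1 = 1 / phiNuInv ν R 1 := rfl
      _ ≤ 1 / ((2 - ν) / 6) := one_div_le_one_div_of_le hpos hlow
      _ = 6 / (2 - ν) := one_div_div _ _
end
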